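/- arXiv:2011.04290 — 5 statements merged into one kernel-verified Lean document; each statement's English description precedes it below -/
import Mathlib

section
/- Let p ≥ 3 be odd, a > 0 and α ∈ ℝ. If q = (q_1,…,q_{p−1}) : ℝ → ℝ^{p−1} is a solution of the reduced system, then the function Q : ℝ → ℝ^{2p} defined by Q_j(t) = q_j(t) for 1 ≤ j ≤ p−1, Q_p(t) = Q_{2p}(t) = 0, and Q_{2p−j}(t) = −q_j(t) for 1 ≤ j ≤ p−1, is a solution of the periodic FPU α-chain with 2p particles and alternating masses (m_j = 1 for j odd, m_j = 1/a for j even). Thus the symmetry relations q_p = q_{2p} = 0, q_{2p−j} = −q_j define an invariant manifold of the 2p-particle chain on which the dynamics is given by the reduced system. -/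
/-- Masses of the alternating FPU-chain with mass parameter `a`:
mass `1` for the particles with odd index and mass `1/a` for those with even
index (indices read in `{0, …, N-1}`, where `0` stands for particle `N`,
which has even index). -/
noncomputable def altMass (N : ℕ) (a : ℝ) (j : ZMod N) : ℝ :=
  if j.val % 2 = 1 then 1 else 1 / a

/-- `q : ℝ → ZMod N → ℝ` is a (twice differentiable) solution of the periodic
FPU α-chain with `N` particles, masses `m` and parameter `α`:
`m_j q̈_j = (q_{j+1} - 2 q_j + q_{j-1}) + α ((q_{j+1} - q_j)² - (q_j - q_{j-1})²)`,
indices taken modulo `N`. -/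
def IsFPUSolution (N : ℕ) (m : ZMod N → ℝ) (α : ℝ) (q : ℝ → ZMod N → ℝ) : Prop :=
  (∀ j, Differentiable ℝ fun t => q t j) ∧
  (∀ j, Differentiable ℝ (deriv fun t => q t j)) ∧
  ∀ (j : ZMod N) (t : ℝ),
    m j * deriv (deriv fun s => q s j) t =
      (q t (j + 1) - 2 * q t j + q t (j - 1)) +
        α * ((q t (j + 1) - q t j) ^ 2 - (q t j - q t (j - 1)) ^ 2)

/-- `q` (only the values `q_1, …, q_{p-1}` matter, with the conventions
`q_0 = q_p = 0` built in) is a twice differentiable solution of the reduced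
system: `ε_j q̈_j + 2 q_j - q_{j-1} - q_{j+1} =
α (q_{j+1}² - 2 q_j q_{j+1} + 2 q_{j-1} q_j - q_{j-1}²)` for `1 ≤ j ≤ p-1`,
where `ε_j = 1` for odd `j` and `ε_j = m` for even `j`. -/
def IsReducedSolution (p : ℕ) (m α : ℝ) (q : ℝ → ℕ → ℝ) : Prop :=
  (∀ j, Differentiable ℝ fun t => q t j) ∧
  (∀ j, Differentiable ℝ (deriv fun t => q t j)) ∧
  (∀ t, q t 0 = 0) ∧ (∀ t, q t p = 0) ∧
  ∀ j, 1 ≤ j → j ≤ p - 1 → ∀ t : ℝ,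
    (if j % 2 = 1 then 1 else m) * deriv (deriv fun s => q s j) t
        + 2 * q t j - q t (j - 1) - q t (j + 1) =
      α * ((q t (j + 1)) ^ 2 - 2 * q t j * q t (j + 1)
            + 2 * q t (j - 1) * q t j - (q t (j - 1)) ^ 2)

/-- The symmetric extension of a solution of the reduced system
(`Q_j = q_j` for `1 ≤ j ≤ p-1`, `Q_p = Q_{2p} = 0`, `Q_{2p-j} = -q_j`)
is a solution of the periodic alternating FPU α-chain with `2p` particles;
i.e. the symmetry relations define an invariant manifold on which the
dynamics is the reduced system. -/
theorem reduced_solution_extends_to_chain (p : ℕ) (hodd : Odd p) (hp : 3 ≤ p)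
    (a α : ℝ) (ha : 0 < a) (q : ℝ → ℕ → ℝ)
    (hq : IsReducedSolution p (1 / a) α q) :
    IsFPUSolution (2 * p) (altMass (2 * p) a) α
      (fun t j =>
        if j.val = 0 ∨ j.val = p then 0
        else if j.val < p then q t j.val
        else -(q t (2 * p - j.val))) := by
  obtain ⟨hd1, hd2, h0, hp0, heq⟩ := hq
  haveI : NeZero (2 * p) := ⟨by omega⟩
  have hF1 : ∀ (t : ℝ) (n : ℕ), n ≤ p →
      (if n = 0 ∨ n = p then (0:ℝ) else if n < p then q t n else -(q t (2 * p - n)))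
        = q t n := by
    intro t n hn
    by_cases h : n = 0 ∨ n = p
    · rcases h with h | h <;> simp [h, h0 t, hp0 t]
    · rw [if_neg h, if_pos (by omega)]
  have hF2 : ∀ (t : ℝ) (n : ℕ), p ≤ n → n ≤ 2 * p →
      (if n = 0 ∨ n = p then (0:ℝ) else if n < p then q t n else -(q t (2 * p - n)))
        = -(q t (2 * p - n)) := by
    intro t n hn hn2
    by_cases h : n = 0 ∨ n = p
    · rw [if_pos h]
      have hnp : 2 * p - n = p := by omega
      rw [hnp, hp0 t, neg_zero]
    · rw [if_neg h, if_neg (by omega)]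
  refine ⟨?_, ?_, ?_⟩
  · intro j
    by_cases h1 : j.val = 0 ∨ j.val = p
    · simp only [if_pos h1]; exact differentiable_const 0
    · by_cases h2 : j.val < p
      · simp only [if_neg h1, if_pos h2]; exact hd1 _
      · simp only [if_neg h1, if_neg h2]; exact (hd1 _).neg
  · intro j
    by_cases h1 : j.val = 0 ∨ j.val = p
    · simp only [if_pos h1, deriv_const']; exact differentiable_const 0
    · by_cases h2 : j.val < p
      · simp only [if_neg h1, if_pos h2]; exact hd2 _
      · simp only [if_neg h1, if_neg h2]
        have hneg : (deriv fun t => -(q t (2 * p - j.val)))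
            = fun t => -((deriv fun s => q s (2 * p - j.val)) t) :=
          funext fun t => deriv.neg
        rw [hneg]
        exact (hd2 _).neg
  · intro j t
    obtain ⟨n, hn, hv⟩ : ∃ n, n < 2 * p ∧ j.val = n := ⟨j.val, ZMod.val_lt j, rfl⟩
    have hplus : j + 1 = ((n + 1 : ℕ) : ZMod (2 * p)) := by
      rw [Nat.cast_add, Nat.cast_one, ← hv, ZMod.natCast_zmod_val]
    have hplusval : (j + 1).val = (n + 1) % (2 * p) := by
      rw [hplus, ZMod.val_natCast]
    have h2p1 : ((2 * p - 1 : ℕ) : ZMod (2 * p)) = -1 := by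
      have h' : ((2 * p - 1 : ℕ) : ZMod (2 * p)) + 1 = ((2 * p : ℕ) : ZMod (2 * p)) := by
        rw [← Nat.cast_one (R := ZMod (2 * p)), ← Nat.cast_add]
        congr 1
        omega
      rw [ZMod.natCast_self] at h'
      exact eq_neg_of_add_eq_zero_left h'
    have hminus : j - 1 = ((n + (2 * p - 1) : ℕ) : ZMod (2 * p)) := by
      rw [Nat.cast_add, h2p1, ← hv, ZMod.natCast_zmod_val]
      ring
    have hminusval : (j - 1).val = (n + (2 * p - 1)) % (2 * p) := by
      rw [hminus, ZMod.val_natCast]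
    simp only [altMass, hv, hplusval, hminusval]
    rcases (show n = 0 ∨ (1 ≤ n ∧ n ≤ p - 1) ∨ n = p ∨ (p + 1 ≤ n ∧ n ≤ 2 * p - 1)
        from by omega) with h | ⟨h1, h2⟩ | h | ⟨h1, h2⟩
    · subst h
      have e1 : (0 + 1) % (2 * p) = 1 := Nat.mod_eq_of_lt (by omega)
      have e2 : (0 + (2 * p - 1)) % (2 * p) = 2 * p - 1 := by
        rw [Nat.zero_add]; exact Nat.mod_eq_of_lt (by omega)
      rw [e1, e2]
      have g0 : (fun s => if (0:ℕ) = 0 ∨ (0:ℕ) = p then (0:ℝ)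
          else if (0:ℕ) < p then q s 0 else -(q s (2 * p - 0))) = fun _ => (0:ℝ) :=
        funext fun s => by rw [hF1 s 0 (by omega), h0 s]
      rw [g0, hF1 t 0 (by omega), h0 t, hF1 t 1 (by omega),
        hF2 t (2 * p - 1) (by omega) (by omega),
        show 2 * p - (2 * p - 1) = 1 from by omega]
      simp only [deriv_const']
      ring
    · have e1 : (n + 1) % (2 * p) = n + 1 := Nat.mod_eq_of_lt (by omega)
      have e2 : (n + (2 * p - 1)) % (2 * p) = n - 1 := by
        rw [show n + (2 * p - 1) = 2 * p + (n - 1) from by omega, Nat.add_mod_left]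
        exact Nat.mod_eq_of_lt (by omega)
      rw [e1, e2]
      have g0 : (fun s => if n = 0 ∨ n = p then (0:ℝ)
          else if n < p then q s n else -(q s (2 * p - n))) = fun s => q s n :=
        funext fun s => hF1 s n (by omega)
      rw [g0, hF1 t n (by omega), hF1 t (n + 1) (by omega), hF1 t (n - 1) (by omega)]
      linear_combination heq n h1 h2 t
    · rw [h]
      have e1 : (p + 1) % (2 * p) = p + 1 := Nat.mod_eq_of_lt (by omega)
      have e2 : (p + (2 * p - 1)) % (2 * p) = p - 1 := by
        rw [show p + (2 * p - 1) = 2 * p + (p - 1) from by omega, Nat.add_mod_left]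
        exact Nat.mod_eq_of_lt (by omega)
      rw [e1, e2]
      have g0 : (fun s => if p = 0 ∨ p = p then (0:ℝ)
          else if p < p then q s p else -(q s (2 * p - p))) = fun _ => (0:ℝ) :=
        funext fun s => by rw [hF1 s p (by omega), hp0 s]
      rw [g0, hF1 t p (by omega), hp0 t,
        hF2 t (p + 1) (by omega) (by omega),
        show 2 * p - (p + 1) = p - 1 from by omega,
        hF1 t (p - 1) (by omega)]
      simp only [deriv_const']
      ring
    · have e2 : (n + (2 * p - 1)) % (2 * p) = n - 1 := by
        rw [show n + (2 * p - 1) = 2 * p + (n - 1) from by omega, Nat.add_mod_left]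
        exact Nat.mod_eq_of_lt (by omega)
      have g0 : (fun s => if n = 0 ∨ n = p then (0:ℝ)
          else if n < p then q s n else -(q s (2 * p - n))) = fun s => -(q s (2 * p - n)) :=
        funext fun s => hF2 s n (by omega) (by omega)
      have hdd : deriv (deriv fun s => -(q s (2 * p - n))) t
          = -(deriv (deriv fun s => q s (2 * p - n)) t) := by
        have hn1 : (deriv fun s => -(q s (2 * p - n)))
            = fun s => -((deriv fun u => q u (2 * p - n)) s) := funext fun s => deriv.neg
        rw [hn1]
        exact deriv.neg
      have hpar : n % 2 = (2 * p - n) % 2 := by omega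
      have hk1 : 1 ≤ 2 * p - n := by omega
      have hk2 : 2 * p - n ≤ p - 1 := by omega
      have H := heq (2 * p - n) hk1 hk2 t
      rcases eq_or_lt_of_le (show n + 1 ≤ 2 * p from by omega) with he | he
      · -- n = 2p - 1, so j+1 wraps to 0
        have e1 : (n + 1) % (2 * p) = 0 := by rw [he, Nat.mod_self]
        rw [e1, e2, g0, if_pos (Or.inl rfl),
          hF2 t n (by omega) (by omega),
          hF2 t (n - 1) (by omega) (by omega),
          show 2 * p - (n - 1) = 2 * p - n + 1 from by omega, hdd, hpar]
        have hn0 : 2 * p - n = 1 := by omega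
        rw [hn0] at H ⊢
        rw [show (1:ℕ) - 1 = 0 from rfl, h0 t] at H
        rw [if_pos (show 1 % 2 = 1 from rfl)] at H ⊢
        linear_combination -H
      · have e1 : (n + 1) % (2 * p) = n + 1 := Nat.mod_eq_of_lt he
        rw [e1, e2, g0,
          hF2 t n (by omega) (by omega),
          hF2 t (n + 1) (by omega) (by omega),
          hF2 t (n - 1) (by omega) (by omega),
          show 2 * p - (n + 1) = 2 * p - n - 1 from by omega,
          show 2 * p - (n - 1) = 2 * p - n + 1 from by omega, hdd, hpar]
        linear_combination -H
end

section
/- Let N = 2p with p ≥ 2, a > 0 and α ∈ ℝ. The periodic alternating FPU α-chain with N particles is equivariant under the reflection σ defined by (σq)_j(t) = −q_{2p−j}(t) (indices modulo 2p): if q : ℝ → ℝ^{2p} is a solution, then σq is also a solution. -/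
lemma altMass_neg (p : ℕ) (hp : 2 ≤ p) (a : ℝ) (j : ZMod (2 * p)) :
    altMass (2 * p) a (-j) = altMass (2 * p) a j := by
  have hN : (2 * p) ≠ 0 := by omega
  haveI : NeZero (2 * p) := ⟨hN⟩
  unfold altMass
  rcases eq_or_ne j 0 with rfl | hj
  · simp
  · have h := ZMod.neg_val j
    rw [h]
    simp only [hj, if_false]
    have hlt : j.val ≤ 2 * p := le_of_lt (ZMod.val_lt j)
    have hj0 : j.val ≠ 0 := fun h0 => hj (by rwa [← ZMod.val_eq_zero])
    have hsub : (2 * p - j.val) % 2 = j.val % 2 := by omega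
    rw [hsub]

/-- The periodic alternating FPU α-chain with `N = 2p` particles is equivariant
under the reflection `(σq)_j = -q_{2p-j}` (indices modulo `2p`, so `2p - j = -j`
in `ZMod (2p)`): if `q` is a solution then so is `σq`. -/
theorem fpu_reflection_equivariance (p : ℕ) (hp : 2 ≤ p) (a α : ℝ) (ha : 0 < a)
    (q : ℝ → ZMod (2 * p) → ℝ)
    (hq : IsFPUSolution (2 * p) (altMass (2 * p) a) α q) :
    IsFPUSolution (2 * p) (altMass (2 * p) a) α (fun t j => -q t (-j)) := by
  obtain ⟨hd1, hd2, heq⟩ := hq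
  have hderiv : ∀ j : ZMod (2 * p),
      (deriv fun t => -q t (-j)) = fun t => -(deriv fun t => q t (-j)) t := by
    intro j
    funext t
    exact deriv.neg
  refine ⟨fun j => (hd1 (-j)).neg, fun j => ?_, fun j t => ?_⟩
  · rw [hderiv j]
    exact (hd2 (-j)).neg
  · have h2 : deriv (deriv fun s => -q s (-j)) t
        = -(deriv (deriv fun s => q s (-j)) t) := by
      rw [hderiv j]
      exact deriv.neg
    have hm := heq (-j) t
    have e1 : (-j : ZMod (2 * p)) + 1 = -(j - 1) := by ring
    have e2 : (-j : ZMod (2 * p)) - 1 = -(j + 1) := by ring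
    rw [e1, e2, altMass_neg p hp a j] at hm
    simp only []
    rw [h2]
    nlinarith [hm]
end

section
/- Consider the equilibrium equations of the reduced system for p = 5 with α = 1: 2q₁ − q₂ = q₂² − 2q₁q₂; 2q₂ − q₁ − q₃ = q₃² − 2q₂q₃ + 2q₁q₂ − q₁²; 2q₃ − q₂ − q₄ = q₄² − 2q₃q₄ + 2q₂q₃ − q₂²; 2q₄ − q₃ = 2q₃q₄ − q₃². The set of solutions (q₁, q₂, q₃, q₄) ∈ ℝ⁴ with q₂ = −1 and q₃ = 1 is exactly {(2, −1, 1, −2), (2, −1, 1, 3), (−3, −1, 1, −2), (−3, −1, 1, 3)}; i.e., q₁ ∈ {2, −3} and q₄ ∈ {−2, 3}. In particular these four points (with zero velocities) are nontrivial equilibria of the reduced 4-degree-of-freedom system. -/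
/-- Equilibria of the reduced system for `p = 5`, `α = 1` (10-particle chain):
the solutions of the equilibrium equations with `q₂ = -1`, `q₃ = 1` are exactly
`(2, -1, 1, -2)`, `(2, -1, 1, 3)`, `(-3, -1, 1, -2)`, `(-3, -1, 1, 3)`; i.e.
`q₁ ∈ {2, -3}` and `q₄ ∈ {-2, 3}`.  In particular these four points (with zero
velocities) are nontrivial equilibria of the reduced 4-degree-of-freedom
system. -/
theorem ten_particle_equilibria (q1 q2 q3 q4 : ℝ) :
    (2 * q1 - q2 = q2 ^ 2 - 2 * q1 * q2 ∧
      2 * q2 - q1 - q3 = q3 ^ 2 - 2 * q2 * q3 + 2 * q1 * q2 - q1 ^ 2 ∧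
      2 * q3 - q2 - q4 = q4 ^ 2 - 2 * q3 * q4 + 2 * q2 * q3 - q2 ^ 2 ∧
      2 * q4 - q3 = 2 * q3 * q4 - q3 ^ 2 ∧
      q2 = -1 ∧ q3 = 1) ↔
    ((q1, q2, q3, q4) = ((2 : ℝ), (-1 : ℝ), (1 : ℝ), (-2 : ℝ)) ∨
      (q1, q2, q3, q4) = ((2 : ℝ), (-1 : ℝ), (1 : ℝ), (3 : ℝ)) ∨
      (q1, q2, q3, q4) = ((-3 : ℝ), (-1 : ℝ), (1 : ℝ), (-2 : ℝ)) ∨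
      (q1, q2, q3, q4) = ((-3 : ℝ), (-1 : ℝ), (1 : ℝ), (3 : ℝ))) := by
  constructor
  · rintro ⟨h1, h2, h3, h4, rfl, rfl⟩
    have hq1 : (q1 - 2) * (q1 + 3) = 0 := by nlinarith [h2]
    have hq4 : (q4 - 3) * (q4 + 2) = 0 := by nlinarith [h3]
    rcases mul_eq_zero.mp hq1 with h | h <;> rcases mul_eq_zero.mp hq4 with h' | h'
    · exact Or.inr (Or.inl (by simp [Prod.ext_iff]; constructor <;> linarith))
    · exact Or.inl (by simp [Prod.ext_iff]; constructor <;> linarith)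
    · exact Or.inr (Or.inr (Or.inr (by simp [Prod.ext_iff]; constructor <;> linarith)))
    · exact Or.inr (Or.inr (Or.inl (by simp [Prod.ext_iff]; constructor <;> linarith)))
  · rintro (h | h | h | h) <;> simp_all [Prod.ext_iff] <;> norm_num
end

section
/- Let a > 0 and let B be the 4 × 4 matrix with rows (2, −1, 0, 0), (−a, 2a, −a, 0), (0, −1, 2, −1), (0, 0, −a, 2a). Then the characteristic polynomial of B equals (X² − 2(a+1)X + a(5+√5)/2) · (X² − 2(a+1)X + a(5−√5)/2). Equivalently, the eigenvalues of B are a + 1 ± √(1 − ((1+√5)/2)a + a²) and a + 1 ± √(1 − ((1−√5)/2)a + a²). -/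
/-!
With `Y = X² - 2(a+1)X`, expanding `det (X - B)` gives `Y² + 5aY + 5a²`, which splits over
`ℚ(√5)` as `(Y + a(5+√5)/2)(Y + a(5-√5)/2)`. A factor `X² - 2(a+1)X + c` has the roots
`a + 1 ± √((a+1)² - c)`, and here `(a+1)² - a(5±√5)/2 = 1 - ((1±√5)/2)a + a²` is nonnegative for
every real `a`, because `((1±√5)/2)² < 4`.
-/

open Polynomial

theorem charpoly_alternatingChain_five {R : Type*} [CommRing R] (a : R) :
    Matrix.charpoly !![(2 : R), -1, 0, 0; -a, 2 * a, -a, 0; 0, -1, 2, -1; 0, 0, -a, 2 * a] =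
      (X ^ 2 - C (2 * (a + 1)) * X) ^ 2 + C (5 * a) * (X ^ 2 - C (2 * (a + 1)) * X) +
        C (5 * a ^ 2) := by
  rw [Matrix.charpoly, Matrix.det_succ_row_zero]
  simp [Fin.sum_univ_succ, Matrix.det_fin_three, Matrix.charmatrix_apply, Fin.succAbove,
    Matrix.submatrix, map_ofNat]
  ring

theorem add_C_mul_add_C {R : Type*} [CommRing R] (Y : R[X]) (p q : R) :
    (Y + C p) * (Y + C q) = Y ^ 2 + C (p + q) * Y + C (p * q) := by
  simp only [map_add, map_mul]
  ring

theorem sq_add_C_mul_add_C_eq_mul {K : Type*} [Field K] (h2 : (2 : K) ≠ 0) (Y : K[X])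
    (a s : K) (hs : s ^ 2 = 5) :
    Y ^ 2 + C (5 * a) * Y + C (5 * a ^ 2) =
      (Y + C (a * (5 + s) / 2)) * (Y + C (a * (5 - s) / 2)) := by
  have hsum : a * (5 + s) / 2 + a * (5 - s) / 2 = 5 * a := by
    field_simp
    ring
  have hprod : a * (5 + s) / 2 * (a * (5 - s) / 2) = 5 * a ^ 2 := by
    field_simp
    linear_combination -a ^ 2 * hs
  rw [add_C_mul_add_C, hsum, hprod]

theorem X_sq_sub_C_mul_X_add_C_eq_mul {R : Type*} [CommRing R] (b c d : R)
    (hd : d ^ 2 = b ^ 2 - c) :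
    X ^ 2 - C (2 * b) * X + C c = (X - C (b + d)) * (X - C (b - d)) := by
  have hc : c = (b + d) * (b - d) := by linear_combination hd
  rw [hc, map_mul, map_mul, map_ofNat]
  simp only [map_add, map_sub]
  ring

theorem one_sub_mul_add_sq_nonneg {t : ℝ} (ht : t ^ 2 ≤ 4) (a : ℝ) :
    0 ≤ 1 - t * a + a ^ 2 := by
  nlinarith [sq_nonneg (a - t / 2)]

theorem charpoly_ten_particle_reduced_general (a : ℝ) :
    (Matrix.charpoly
        (!![(2 : ℝ), -1, 0, 0;
            -a, 2 * a, -a, 0;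
            0, -1, 2, -1;
            0, 0, -a, 2 * a]) =
      (X ^ 2 - C (2 * (a + 1)) * X + C (a * (5 + Real.sqrt 5) / 2)) *
        (X ^ 2 - C (2 * (a + 1)) * X + C (a * (5 - Real.sqrt 5) / 2))) ∧
    ((Matrix.charpoly
        (!![(2 : ℝ), -1, 0, 0;
            -a, 2 * a, -a, 0;
            0, -1, 2, -1;
            0, 0, -a, 2 * a])).roots =
      {a + 1 + Real.sqrt (1 - (1 + Real.sqrt 5) / 2 * a + a ^ 2),
        a + 1 - Real.sqrt (1 - (1 + Real.sqrt 5) / 2 * a + a ^ 2),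
        a + 1 + Real.sqrt (1 - (1 - Real.sqrt 5) / 2 * a + a ^ 2),
        a + 1 - Real.sqrt (1 - (1 - Real.sqrt 5) / 2 * a + a ^ 2)}) := by
  set s := Real.sqrt 5
  have hs : s ^ 2 = 5 := Real.sq_sqrt (by norm_num)
  set d₁ := Real.sqrt (1 - (1 + s) / 2 * a + a ^ 2)
  set d₂ := Real.sqrt (1 - (1 - s) / 2 * a + a ^ 2)
  have hd₁ : d₁ ^ 2 = (a + 1) ^ 2 - a * (5 + s) / 2 := by
    rw [Real.sq_sqrt (one_sub_mul_add_sq_nonneg (by nlinarith [Real.sqrt_nonneg 5]) a)]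
    ring
  have hd₂ : d₂ ^ 2 = (a + 1) ^ 2 - a * (5 - s) / 2 := by
    rw [Real.sq_sqrt (one_sub_mul_add_sq_nonneg (by nlinarith [Real.sqrt_nonneg 5]) a)]
    ring
  have hfactor := (charpoly_alternatingChain_five a).trans
    (sq_add_C_mul_add_C_eq_mul two_ne_zero _ a s hs)
  refine ⟨hfactor, ?_⟩
  rw [hfactor, X_sq_sub_C_mul_X_add_C_eq_mul _ _ _ hd₁, X_sq_sub_C_mul_X_add_C_eq_mul _ _ _ hd₂,
    ← roots_multiset_prod_X_sub_C {a + 1 + d₁, a + 1 - d₁, a + 1 + d₂, a + 1 - d₂}]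
  simp [mul_assoc]

/-- For `p = 5` (10-particle alternating chain), the characteristic polynomial
of the matrix `B = M⁻¹K` of the reduced system, with rows `(2, -1, 0, 0)`,
`(-a, 2a, -a, 0)`, `(0, -1, 2, -1)`, `(0, 0, -a, 2a)`, equals
`(X² - 2(a+1)X + a(5+√5)/2)(X² - 2(a+1)X + a(5-√5)/2)`; equivalently its roots
(the squared normal-mode frequencies) are `a + 1 ± √(1 - ((1+√5)/2)a + a²)` and
`a + 1 ± √(1 - ((1-√5)/2)a + a²)`. -/
theorem charpoly_ten_particle_reduced (a : ℝ) (ha : 0 < a) :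
    (Matrix.charpoly
        (!![(2 : ℝ), -1, 0, 0;
            -a, 2 * a, -a, 0;
            0, -1, 2, -1;
            0, 0, -a, 2 * a]) =
      (X ^ 2 - C (2 * (a + 1)) * X + C (a * (5 + Real.sqrt 5) / 2)) *
        (X ^ 2 - C (2 * (a + 1)) * X + C (a * (5 - Real.sqrt 5) / 2))) ∧
    ((Matrix.charpoly
        (!![(2 : ℝ), -1, 0, 0;
            -a, 2 * a, -a, 0;
            0, -1, 2, -1;
            0, 0, -a, 2 * a])).roots =
      {a + 1 + Real.sqrt (1 - (1 + Real.sqrt 5) / 2 * a + a ^ 2),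
        a + 1 - Real.sqrt (1 - (1 + Real.sqrt 5) / 2 * a + a ^ 2),
        a + 1 + Real.sqrt (1 - (1 - Real.sqrt 5) / 2 * a + a ^ 2),
        a + 1 - Real.sqrt (1 - (1 - Real.sqrt 5) / 2 * a + a ^ 2)}) :=
  charpoly_ten_particle_reduced_general a
end

section
/- Let p ≥ 3 be odd and a > 0. Let K be the (p−1) × (p−1) tridiagonal matrix with 2 on the diagonal and −1 on the sub- and superdiagonal, let M = diag(m_1,…,m_{p−1}) with m_j = 1 for j odd and m_j = 1/a for j even, and set B = M^{−1}K. Then the characteristic polynomial of B equals ∏_{j=1}^{(p−1)/2} (X² − (2+2a)X + 4a sin²(πj/p)). Equivalently, the eigenvalues of B come in pairs λ_{2j−1}, λ_{2j} which are the eigenvalues of the 2 × 2 matrix with rows (2a, 2a cos(πj/p)) and (2 cos(πj/p), 2), for j = 1,…,(p−1)/2; in particular λ_{2j−1} + λ_{2j} = 2 + 2a for every j. -/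
/-!
For `θ = π j / p`, a standing wave `k ↦ c_k sin (k θ)` whose amplitudes `c_k` alternate between
`-2 cos θ` (odd sites) and `l - 2` (even sites) is an eigenvector of `B` for the eigenvalue `l`
exactly when `l` is a root of the `j`-th quadratic factor; the boundary conditions hold because
`sin (p θ) = 0`. For `a > 0` the roots `1 + a ± √((1 - a)² + 4 a cos² θ)`, `1 ≤ j ≤ (p - 1) / 2`,
are `p - 1` pairwise distinct numbers, since `cos` is positive and injective on `(0, π / 2)`, so
they are all the roots of the monic characteristic polynomial of degree `p - 1`.
-/

open Polynomial Real Matrix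

theorem Matrix.isRoot_charpoly_of_mulVec_eq_smul {n R : Type*} [Fintype n] [DecidableEq n]
    [CommRing R] [IsDomain R] {A : Matrix n n R} {μ : R} {v : n → R} (hv : v ≠ 0)
    (hAv : A *ᵥ v = μ • v) : A.charpoly.IsRoot μ := by
  rw [← charpoly_toLin', ← Module.End.hasEigenvalue_iff_isRoot_charpoly]
  exact Module.End.hasEigenvalue_of_hasEigenvector
    (Module.End.hasEigenvector_iff.2 ⟨by simpa [Module.End.mem_eigenspace_iff] using hAv, hv⟩)

theorem Polynomial.Monic.eq_prod_X_sub_C_of_injOn {R ι : Type*} [CommRing R] [IsDomain R]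
    {P : R[X]} (hP : P.Monic) {s : Finset ι} {r : ι → R} (hr : Set.InjOn r s)
    (hdeg : P.natDegree ≤ s.card) (hroot : ∀ i ∈ s, P.IsRoot (r i)) :
    P = ∏ i ∈ s, (X - C (r i)) := by
  have hnodup : (s.val.map r).Nodup := s.nodup.map_on fun i hi j hj h => hr hi hj h
  have hle : s.val.map r ≤ P.roots := (Multiset.le_iff_subset hnodup).2 fun x hx => by
    obtain ⟨i, hi, rfl⟩ := Multiset.mem_map.1 hx
    exact (mem_roots hP.ne_zero).2 (hroot i hi)
  have hroots : s.val.map r = P.roots :=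
    Multiset.eq_of_le_of_card_le hle (by simpa using (card_roots' P).trans hdeg)
  have hcard : P.roots.card = P.natDegree :=
    (card_roots' P).antisymm (hdeg.trans (by simp [← hroots]))
  conv_lhs => rw [← prod_multiset_X_sub_C_of_monic_of_roots_card_eq hP hcard, ← hroots]
  rw [Multiset.map_map, Finset.prod_eq_multiset_prod]
  rfl

theorem Set.InjOn.add_ite_neg_of_pos {ι : Type*} {s : Set ι} {f : ι → ℝ} (hf : s.InjOn f)
    (hpos : ∀ i ∈ s, 0 < f i) (c : ℝ) :
    (s ×ˢ Set.univ).InjOn fun x : ι × Bool => c + if x.2 then f x.1 else -f x.1 := by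
  rintro ⟨i, b⟩ ⟨hi, -⟩ ⟨j, b'⟩ ⟨hj, -⟩ h
  have hi' := hpos i hi
  have hj' := hpos j hj
  cases b <;> cases b' <;>
    simp only [add_right_inj, if_true, if_false, Bool.false_eq_true, neg_inj, Prod.mk.injEq,
      and_true] at h ⊢ <;>
    first | exact hf hi hj h | linarith

theorem Fin.sum_univ_ite_val_eq {M : Type*} [AddCommMonoid M] {n : ℕ} (g : ℕ → M) (k : ℕ) :
    ∑ j : Fin n, (if (j : ℕ) = k then g j else 0) = if k < n then g k else 0 := by
  rw [Fin.sum_univ_eq_sum_range (fun j => if j = k then g j else 0), Finset.sum_ite_eq']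
  simp

section SecondDifference

variable {R : Type*} [CommRing R] {n : ℕ}

/-- `diag ρ * K` for the second-difference matrix `K`. Indices are `0`-based: row `i` belongs to
the particle numbered `i + 1` in the paper. -/
def weightedSecondDiff (n : ℕ) (ρ : ℕ → R) : Matrix (Fin n) (Fin n) R :=
  Matrix.of fun i j => ρ i *
    (if i = j then 2 else if i.val + 1 = j.val ∨ j.val + 1 = i.val then -1 else 0)

theorem weightedSecondDiff_mulVec_apply (ρ w : ℕ → R) (h0 : w 0 = 0) (hn : w (n + 1) = 0)
    (i : Fin n) :
    (weightedSecondDiff n ρ *ᵥ fun j => w (j + 1)) i =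
      ρ i * (2 * w (i + 1) - w i - w (i + 2)) := by
  have hentry : ∀ j : Fin n,
      (if i = j then 2 else if i.val + 1 = j.val ∨ j.val + 1 = i.val then -1 else 0) * w (j + 1)
        = (if (j : ℕ) = i then 2 * w (j + 1) else 0) - (if (j : ℕ) = i + 1 then w (j + 1) else 0)
          - (if (j : ℕ) + 1 = i then w (j + 1) else 0) := by
    intro j
    simp only [Fin.ext_iff]
    split_ifs <;> first | omega | ring
  simp only [mulVec, dotProduct, weightedSecondDiff, of_apply, mul_assoc, ← Finset.mul_sum,
    hentry, Finset.sum_sub_distrib]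
  congr 1
  obtain ⟨i, hi⟩ := i
  have hnext : (if i + 1 < n then w (i + 1 + 1) else 0) = w (i + 2) := by
    split_ifs with h
    · rfl
    · rw [show i + 2 = n + 1 by omega, hn]
  have hprev : ∑ j : Fin n, (if (j : ℕ) + 1 = i then w (j + 1) else 0) = w i := by
    rcases i with _ | i
    · simp [h0]
    · simp only [Nat.add_right_cancel_iff]
      rw [Fin.sum_univ_ite_val_eq (fun k => w (k + 1)), if_pos (by omega)]
  rw [Fin.sum_univ_ite_val_eq (fun k => 2 * w (k + 1)),
    Fin.sum_univ_ite_val_eq (fun k => w (k + 1)), if_pos hi, hnext, hprev]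
  ring

end SecondDifference

/-- `alternatingWeight a k = 1 / m_{k+1}` in the paper's notation. -/
def alternatingWeight (a : ℝ) (k : ℕ) : ℝ := if k % 2 = 0 then 1 else a

noncomputable def modeQuadratic (a θ : ℝ) : ℝ[X] :=
  X ^ 2 - C (2 + 2 * a) * X + C (4 * a * sin θ ^ 2)

/-- The amplitudes `(-2 cos θ, l - 2)` form an eigenvector, for the eigenvalue `l`, of the 2×2 block
`!![2, -2 cos θ; -2 a cos θ, 2 a]` that a pair of neighbouring sites sees, because
`sin ((k - 1) θ) + sin ((k + 1) θ) = 2 cos θ sin (k θ)`. -/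
noncomputable def sineMode (θ l : ℝ) (k : ℕ) : ℝ :=
  (if k % 2 = 1 then -2 * cos θ else l - 2) * sin (k * θ)

theorem sineMode_recurrence {a θ l : ℝ} (hl : (modeQuadratic a θ).IsRoot l) (k : ℕ) :
    alternatingWeight a k * (2 * sineMode θ l (k + 1) - sineMode θ l k - sineMode θ l (k + 2)) =
      l * sineMode θ l (k + 1) := by
  have hl' : l ^ 2 - (2 + 2 * a) * l + 4 * a * sin θ ^ 2 = 0 := by
    simpa [modeQuadratic] using hl
  have hsin_sub :
      sin (k * θ) = sin ((k + 1 : ℕ) * θ) * cos θ - cos ((k + 1 : ℕ) * θ) * sin θ := by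
    rw [← sin_sub]; push_cast; ring_nf
  have hsin_add :
      sin ((k + 2 : ℕ) * θ) = sin ((k + 1 : ℕ) * θ) * cos θ + cos ((k + 1 : ℕ) * θ) * sin θ := by
    rw [← sin_add]; push_cast; ring_nf
  simp only [sineMode, alternatingWeight, hsin_sub, hsin_add]
  rcases Nat.mod_two_eq_zero_or_one k with hk | hk
  · rw [if_pos hk, if_pos (by omega), if_neg (by omega), if_neg (by omega)]
    ring
  · rw [if_neg (by omega), if_neg (by omega), if_pos hk, if_pos (by omega)]
    linear_combination (-sin ((k + 1 : ℕ) * θ)) * hl' +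
      4 * a * sin ((k + 1 : ℕ) * θ) * sin_sq_add_cos_sq θ

theorem weightedSecondDiff_mulVec_sineMode {n : ℕ} {a θ l : ℝ}
    (hl : (modeQuadratic a θ).IsRoot l) (hθ : sin ((n + 1 : ℕ) * θ) = 0) :
    weightedSecondDiff n (alternatingWeight a) *ᵥ (fun j : Fin n => sineMode θ l (j + 1)) =
      l • fun j : Fin n => sineMode θ l (j + 1) := by
  ext i
  rw [weightedSecondDiff_mulVec_apply _ _ (by simp [sineMode]) (by rw [sineMode, hθ, mul_zero]),
    sineMode_recurrence hl]
  rfl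

theorem isRoot_charpoly_weightedSecondDiff {n : ℕ} {a θ l : ℝ} (hn : 0 < n)
    (hl : (modeQuadratic a θ).IsRoot l) (hθ : sin ((n + 1 : ℕ) * θ) = 0) (hsin : sin θ ≠ 0)
    (hcos : cos θ ≠ 0) :
    (weightedSecondDiff n (alternatingWeight a)).charpoly.IsRoot l := by
  have h1 : sineMode θ l 1 ≠ 0 := by simp [sineMode, hsin, hcos]
  exact isRoot_charpoly_of_mulVec_eq_smul (fun h => h1 (congrFun h ⟨0, hn⟩))
    (weightedSecondDiff_mulVec_sineMode hl hθ)

/-- A quarter of the discriminant of `modeQuadratic a θ`, written so that it is visibly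
nonnegative for `0 ≤ a`. -/
noncomputable def modeDiscriminant (a θ : ℝ) : ℝ := (1 - a) ^ 2 + 4 * a * cos θ ^ 2

noncomputable def modeEigenvalue (a θ : ℝ) (b : Bool) : ℝ :=
  1 + a + if b then √(modeDiscriminant a θ) else -√(modeDiscriminant a θ)

theorem modeQuadratic_eq_prod {a : ℝ} (ha : 0 ≤ a) (θ : ℝ) :
    modeQuadratic a θ = ∏ b : Bool, (X - C (modeEigenvalue a θ b)) := by
  set s := √(modeDiscriminant a θ)
  have hs : s ^ 2 = (1 - a) ^ 2 + 4 * a * cos θ ^ 2 :=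
    Real.sq_sqrt (by rw [modeDiscriminant]; positivity)
  have hprod : 4 * a * sin θ ^ 2 = (1 + a + s) * (1 + a - s) := by
    linear_combination hs + 4 * a * sin_sq_add_cos_sq θ
  rw [modeQuadratic, Fintype.prod_bool, hprod, show 2 + 2 * a = (1 + a + s) + (1 + a - s) by ring]
  simp only [modeEigenvalue, if_true, if_false, Bool.false_eq_true, C_add, C_mul, C_neg, C_sub]
  ring

theorem isRoot_modeQuadratic {a : ℝ} (ha : 0 ≤ a) (θ : ℝ) (b : Bool) :
    (modeQuadratic a θ).IsRoot (modeEigenvalue a θ b) := by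
  rw [modeQuadratic_eq_prod ha, IsRoot, eval_prod]
  exact Finset.prod_eq_zero (Finset.mem_univ b) (by simp)

theorem charpoly_modeBlock (a θ : ℝ) :
    (!![2 * a, 2 * a * cos θ; 2 * cos θ, 2]).charpoly = modeQuadratic a θ := by
  rw [charpoly_fin_two, trace_fin_two, det_fin_two, modeQuadratic]
  simp only [of_apply, cons_val', cons_val_zero, cons_val_one, empty_val', cons_val_fin_one]
  congr 2
  · rw [add_comm]
  · linear_combination (-4 * a) * sin_sq_add_cos_sq θ

theorem injOn_sqrt_modeDiscriminant {a : ℝ} (ha : 0 < a) :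
    Set.InjOn (fun θ => √(modeDiscriminant a θ)) (Set.Icc 0 (π / 2)) := by
  intro θ hθ φ hφ h
  have hcos : ∀ x ∈ Set.Icc 0 (π / 2), 0 ≤ cos x := fun x hx =>
    cos_nonneg_of_mem_Icc ⟨by linarith [hx.1, pi_pos], hx.2⟩
  have hD : ∀ x, 0 ≤ modeDiscriminant a x := fun x => by rw [modeDiscriminant]; positivity
  have hsq : cos θ ^ 2 = cos φ ^ 2 := by
    have := (Real.sqrt_inj (hD θ) (hD φ)).1 h
    rw [modeDiscriminant, modeDiscriminant] at this
    exact mul_left_cancel₀ (by positivity : 4 * a ≠ 0) (by linarith)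
  refine injOn_cos ⟨hθ.1, by linarith [hθ.2, pi_pos]⟩ ⟨hφ.1, by linarith [hφ.2, pi_pos]⟩ ?_
  exact (sq_eq_sq₀ (hcos θ hθ) (hcos φ hφ)).1 hsq

theorem injective_pi_mul_div_natCast {p : ℕ} (hp : p ≠ 0) :
    Function.Injective fun j : ℕ => π * j / p := by
  intro j k h
  have hp' : (p : ℝ) ≠ 0 := by exact_mod_cast hp
  simpa only [div_left_inj' hp', mul_right_inj' pi_ne_zero, Nat.cast_inj] using h

theorem pi_mul_div_mem_Ioo {j p : ℕ} (hj : 0 < j) (hjp : 2 * j < p) :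
    π * j / p ∈ Set.Ioo 0 (π / 2) := by
  have hp : (0 : ℝ) < p := by exact_mod_cast (by omega : 0 < p)
  have hjp' : (2 * j : ℝ) < p := by exact_mod_cast hjp
  refine ⟨by positivity, ?_⟩
  rw [div_lt_div_iff₀ hp two_pos]
  nlinarith [pi_pos]

section Modes

variable {p m : ℕ} {a : ℝ}

theorem injOn_modeEigenvalue (ha : 0 < a) (hm : 2 * m < p) :
    Set.InjOn (fun x : ℕ × Bool => modeEigenvalue a (π * x.1 / p) x.2)
      ↑(Finset.Icc 1 m ×ˢ (Finset.univ : Finset Bool)) := by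
  have hθ : ∀ j ∈ Finset.Icc 1 m, π * j / p ∈ Set.Ioo 0 (π / 2) := fun j hj =>
    pi_mul_div_mem_Ioo (Finset.mem_Icc.1 hj).1 (by linarith [(Finset.mem_Icc.1 hj).2])
  rw [Finset.coe_product, Finset.coe_univ]
  refine Set.InjOn.add_ite_neg_of_pos (f := fun j : ℕ => √(modeDiscriminant a (π * j / p)))
    ?_ (fun j hj => ?_) (1 + a)
  · exact (injOn_sqrt_modeDiscriminant ha).comp (injective_pi_mul_div_natCast (by omega)).injOn
      fun j hj => Set.Ioo_subset_Icc_self (hθ j hj)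
  · have := cos_pos_of_mem_Ioo ⟨by linarith [(hθ j hj).1, pi_pos], (hθ j hj).2⟩
    rw [Real.sqrt_pos, modeDiscriminant]
    positivity

theorem isRoot_charpoly_modeEigenvalue (ha : 0 ≤ a) {j : ℕ} (hj : 0 < j) (hjp : 2 * j < p)
    (b : Bool) :
    (weightedSecondDiff (p - 1) (alternatingWeight a)).charpoly.IsRoot
      (modeEigenvalue a (π * j / p) b) := by
  have hθ := pi_mul_div_mem_Ioo hj hjp
  refine isRoot_charpoly_weightedSecondDiff (by omega) (isRoot_modeQuadratic ha _ b) ?_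
    (sin_pos_of_pos_of_lt_pi hθ.1 (by linarith [hθ.2, pi_pos])).ne'
    (cos_pos_of_mem_Ioo ⟨by linarith [hθ.1, pi_pos], hθ.2⟩).ne'
  have hp : (p : ℝ) ≠ 0 := by exact_mod_cast (by omega : p ≠ 0)
  rw [Nat.sub_add_cancel (by omega), show (p : ℝ) * (π * j / p) = j * π by field_simp]
  exact sin_nat_mul_pi j

end Modes

theorem charpoly_reduced_system_general (p : ℕ) (hodd : Odd p) (a : ℝ)
    (ha : 0 < a) :
    (Matrix.of fun i j : Fin (p - 1) =>
        (if i.val % 2 = 0 then (1 : ℝ) else a) *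
          (if i = j then 2
            else if i.val + 1 = j.val ∨ j.val + 1 = i.val then -1 else 0)).charpoly =
      ∏ j ∈ Finset.Icc 1 ((p - 1) / 2),
        (X ^ 2 - C (2 + 2 * a) * X +
          C (4 * a * Real.sin (Real.pi * j / p) ^ 2)) ∧
    ∀ j ∈ Finset.Icc 1 ((p - 1) / 2),
      Matrix.charpoly
          (!![2 * a, 2 * a * Real.cos (Real.pi * j / p);
              2 * Real.cos (Real.pi * j / p), 2]) =
        X ^ 2 - C (2 + 2 * a) * X + C (4 * a * Real.sin (Real.pi * j / p) ^ 2) := by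
  set m := (p - 1) / 2
  have hm : 2 * m < p ∧ p - 1 = m * 2 := by obtain ⟨t, rfl⟩ := hodd; omega
  refine ⟨?_, fun j _ => charpoly_modeBlock a (π * j / p)⟩
  change (weightedSecondDiff (p - 1) (alternatingWeight a)).charpoly =
    ∏ j ∈ Finset.Icc 1 m, modeQuadratic a (π * j / p)
  have hdeg : (weightedSecondDiff (p - 1) (alternatingWeight a)).charpoly.natDegree ≤
      (Finset.Icc 1 m ×ˢ (Finset.univ : Finset Bool)).card := by
    rw [charpoly_natDegree_eq_dim, Finset.card_product, Nat.card_Icc, Finset.card_univ,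
      Fintype.card_bool, Fintype.card_fin]
    omega
  have hroot : ∀ x ∈ Finset.Icc 1 m ×ˢ (Finset.univ : Finset Bool),
      (weightedSecondDiff (p - 1) (alternatingWeight a)).charpoly.IsRoot
        (modeEigenvalue a (π * x.1 / p) x.2) := fun x hx =>
    have hj := Finset.mem_Icc.1 (Finset.mem_product.1 hx).1
    isRoot_charpoly_modeEigenvalue ha.le hj.1 (by omega) x.2
  rw [(charpoly_monic _).eq_prod_X_sub_C_of_injOn (injOn_modeEigenvalue ha hm.1) hdeg hroot,
    Finset.prod_product]
  exact Finset.prod_congr rfl fun j _ => (modeQuadratic_eq_prod ha.le (π * j / p)).symm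

/-- For odd `p ≥ 3`, the characteristic polynomial of `B = M⁻¹K`, where `K` is
the `(p-1) × (p-1)` tridiagonal second-difference matrix and
`M = diag(m_1, …, m_{p-1})` with `m_j = 1` for `j` odd, `m_j = 1/a` for `j`
even (so row `j` of `K` is multiplied by `1` or `a` according to parity;
row `j` corresponds to the `Fin (p-1)` index `j - 1`), equals
`∏_{j=1}^{(p-1)/2} (X² - (2+2a)X + 4a sin²(πj/p))`.  Equivalently, the
eigenvalues of `B` come in pairs `λ_{2j-1}, λ_{2j}` which are the eigenvalues
of the 2×2 matrix `!![2a, 2a cos(πj/p); 2 cos(πj/p), 2]` (whose characteristic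
polynomial is the corresponding quadratic factor); in particular
`λ_{2j-1} + λ_{2j} = 2 + 2a` for every `j`. -/
theorem charpoly_reduced_system (p : ℕ) (hodd : Odd p) (hp : 3 ≤ p) (a : ℝ)
    (ha : 0 < a) :
    (Matrix.of fun i j : Fin (p - 1) =>
        (if i.val % 2 = 0 then (1 : ℝ) else a) *
          (if i = j then 2
            else if i.val + 1 = j.val ∨ j.val + 1 = i.val then -1 else 0)).charpoly =
      ∏ j ∈ Finset.Icc 1 ((p - 1) / 2),
        (X ^ 2 - C (2 + 2 * a) * X +
          C (4 * a * Real.sin (Real.pi * j / p) ^ 2)) ∧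
    ∀ j ∈ Finset.Icc 1 ((p - 1) / 2),
      Matrix.charpoly
          (!![2 * a, 2 * a * Real.cos (Real.pi * j / p);
              2 * Real.cos (Real.pi * j / p), 2]) =
        X ^ 2 - C (2 + 2 * a) * X + C (4 * a * Real.sin (Real.pi * j / p) ^ 2) :=
  charpoly_reduced_system_general p hodd a ha
end
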